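/- Potential change under the shift operator: let x̲ = (x_1, …, x_{N_w}) ∈ X^{N_w} be such that x_i = x_{i_0} for all i_0 ≤ i ≤ N_w. Then U(S(x̲); c) − U(x̲; c) ≤ −U(x_{i_0}; c), where U(x̲; c) is the coupled potential, S is the shift operator, and U(x_{i_0}; c) is the single-system potential. -/

import Mathlib

open MeasureTheory Real Filter Topology Polynomial

noncomputable section

/-- The space of finite signed Borel measures on the extended reals `ℝ̄`. -/
abbrev SM := MeasureTheory.SignedMeasure EReal

namespace SCLDPC

/-- The weight `e^{-α/2}` as an extended nonnegative real (`+∞` at `α = -∞`). -/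
def wt (α : EReal) : ENNReal :=
  if α = ⊥ then ⊤ else if α = ⊤ then 0 else ENNReal.ofReal (Real.exp (-(α.toReal) / 2))

/-- A (nonnegative) Borel measure `μ` on `ℝ̄` is symmetric if
`∫_{-E} e^{-α/2} μ(dα) = ∫_{E} e^{-α/2} μ(dα)` for every Borel set `E`
(stated with extended nonnegative integrals, which is equivalent to requiring
equality whenever one of the two sides is finite). -/
def IsSymmMeasure (μ : Measure EReal) : Prop :=
  ∀ E : Set EReal, MeasurableSet E →
    ∫⁻ α in (fun a : EReal => -a) ⁻¹' E, wt α ∂μ = ∫⁻ α in E, wt α ∂μ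

/-- Positive part of the Jordan decomposition. -/
def jp (x : SM) : Measure EReal := x.toJordanDecomposition.posPart

/-- Negative part of the Jordan decomposition. -/
def jn (x : SM) : Measure EReal := x.toJordanDecomposition.negPart

instance (x : SM) : IsFiniteMeasure (jp x) := x.toJordanDecomposition.posPart_finite

instance (x : SM) : IsFiniteMeasure (jn x) := x.toJordanDecomposition.negPart_finite

/-- A finite signed Borel measure on `ℝ̄` is symmetric iff both parts of its Jordan
decomposition are symmetric measures. -/
def IsSymm (x : SM) : Prop := IsSymmMeasure (jp x) ∧ IsSymmMeasure (jn x)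

/-- Membership in `X`, the set of symmetric probability measures on `ℝ̄`. -/
def MemX (x : SM) : Prop :=
  (∃ (μ : Measure EReal) (hμ : IsProbabilityMeasure μ),
      x = (letI := hμ; μ.toSignedMeasure)) ∧ IsSymm x

/-- Membership in `X_d`, the set of differences of symmetric probability measures. -/
def MemXd (y : SM) : Prop := ∃ x1 x2 : SM, MemX x1 ∧ MemX x2 ∧ y = x1 - x2

/-- Integral of a real function against a finite signed measure. -/
def sInt (f : EReal → ℝ) (x : SM) : ℝ := (∫ α, f α ∂(jp x)) - ∫ α, f α ∂(jn x)

/-- `tanh(α/2)` extended continuously to `ℝ̄`. -/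
def tanhHalf (α : EReal) : ℝ :=
  if α = ⊤ then 1 else if α = ⊥ then -1 else Real.tanh (α.toReal / 2)

/-- The inverse hyperbolic tangent on `(-1, 1)`. -/
def artanh (t : ℝ) : ℝ := Real.log ((1 + t) / (1 - t)) / 2

/-- `2 tanh⁻¹(t)` valued in `ℝ̄` (sending `t ≥ 1` to `+∞` and `t ≤ -1` to `-∞`). -/
def atanhTwo (t : ℝ) : EReal :=
  if 1 ≤ t then ⊤ else if t ≤ -1 then ⊥ else ((2 * artanh t : ℝ) : EReal)

/-- Variable-node convolution `⊛` of two (nonnegative) measures: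
`(μ ⊛ ν)(E) = ∫ μ(E - α) ν(dα)`, i.e. the pushforward of `μ × ν` under addition. -/
def mConv (μ ν : Measure EReal) : Measure EReal :=
  (μ.prod ν).map fun p => p.1 + p.2

/-- Check-node convolution `⊠` of two (nonnegative) measures:
`(μ ⊠ ν)(E) = ∫ μ(2 tanh⁻¹(tanh(E/2) / tanh(α/2))) ν(dα)`, where the argument of `μ`
is the image of `E` under `β ↦ 2 tanh⁻¹(tanh(β/2) / tanh(α/2))`; equivalently, the
pushforward of `μ × ν` under `(β, α) ↦ 2 tanh⁻¹(tanh(β/2) · tanh(α/2))`. -/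
def mCheck (μ ν : Measure EReal) : Measure EReal :=
  (μ.prod ν).map fun p => atanhTwo (tanhHalf p.1 * tanhHalf p.2)

instance (μ ν : Measure EReal) [IsFiniteMeasure μ] [IsFiniteMeasure ν] :
    IsFiniteMeasure (mConv μ ν) := by unfold mConv; infer_instance

instance (μ ν : Measure EReal) [IsFiniteMeasure μ] [IsFiniteMeasure ν] :
    IsFiniteMeasure (mCheck μ ν) := by unfold mCheck; infer_instance

/-- The variable-node operation `⊛` extended bilinearly to finite signed measures. -/
def sConv (x y : SM) : SM :=
  (mConv (jp x) (jp y)).toSignedMeasure - (mConv (jp x) (jn y)).toSignedMeasure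
    - (mConv (jn x) (jp y)).toSignedMeasure + (mConv (jn x) (jn y)).toSignedMeasure

/-- The check-node operation `⊠` extended bilinearly to finite signed measures. -/
def sCheck (x y : SM) : SM :=
  (mCheck (jp x) (jp y)).toSignedMeasure - (mCheck (jp x) (jn y)).toSignedMeasure
    - (mCheck (jn x) (jp y)).toSignedMeasure + (mCheck (jn x) (jn y)).toSignedMeasure

/-- The integrand `log₂(1 + e^{-α})` of the entropy functional (with the harmless
convention that it vanishes at `α = ±∞`; symmetric measures put no mass at `-∞`). -/
def entFn (α : EReal) : ℝ :=
  if α = ⊤ then 0 else if α = ⊥ then 0 else Real.logb 2 (1 + Real.exp (-(α.toReal)))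

/-- The entropy functional `H(x) = ∫ log₂(1 + e^{-α}) x(dα)`. -/
def H (x : SM) : ℝ := sInt entFn x

/-- `Δ_0`, the unit point mass at `0`. -/
def d0 : SM := (Measure.dirac (0 : EReal)).toSignedMeasure

/-- `Δ_∞`, the unit point mass at `+∞`. -/
def dTop : SM := (Measure.dirac (⊤ : EReal)).toSignedMeasure

/-- `x^{⊛n}` with `x^{⊛0} = Δ_0`. -/
def convPow (x : SM) : ℕ → SM
  | 0 => d0
  | n + 1 => sConv (convPow x n) x

/-- `x^{⊠n}` with `x^{⊠0} = Δ_∞`. -/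
def checkPow (x : SM) : ℕ → SM
  | 0 => dTop
  | n + 1 => sCheck (checkPow x n) x

/-- `p^{⊛}(x) = Σ_n p_n x^{⊛n}` for a real polynomial `p`. -/
def polyConv (p : Polynomial ℝ) (x : SM) : SM :=
  ∑ n ∈ Finset.range (p.natDegree + 1), p.coeff n • convPow x n

/-- `p^{⊠}(x) = Σ_n p_n x^{⊠n}` for a real polynomial `p`. -/
def polyCheck (p : Polynomial ℝ) (x : SM) : SM :=
  ∑ n ∈ Finset.range (p.natDegree + 1), p.coeff n • checkPow x n

/-- The single-system potential functional `U(x; c)` of the LDPC(λ, ρ) ensemble: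
`U(x; c) = (L'(1)/R'(1)) H(R^⊠(x)) + L'(1) H(ρ^⊠(x)) - L'(1) H(x ⊠ ρ^⊠(x))
  - H(c ⊛ L^⊛(ρ^⊠(x)))`. -/
def potU (rho L R : Polynomial ℝ) (x c : SM) : ℝ :=
  (derivative L).eval 1 / (derivative R).eval 1 * H (polyCheck R x)
    + (derivative L).eval 1 * H (polyCheck rho x)
    - (derivative L).eval 1 * H (sCheck x (polyCheck rho x))
    - H (sConv c (polyConv L (polyCheck rho x)))

/-- Extension of a vector `(x_1, …, x_{N_w})` by `Δ_∞` outside `{1, …, N_w}`,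
where `N_w = 2N + w - 1`. -/
def extVec (N w : ℕ) (xv : ℤ → SM) : ℤ → SM :=
  fun i => if 1 ≤ i ∧ i ≤ ((2 * N + w - 1 : ℕ) : ℤ) then xv i else dTop

/-- The coupled potential functional `U(x̲; c)` of the spatially-coupled system, with
the convention that `x_i = Δ_∞` for indices `i ≤ 0` and `i > N_w = 2N + w - 1`. -/
def coupledU (rho L R : Polynomial ℝ) (N w : ℕ) (c : SM) (xv : ℤ → SM) : ℝ :=
  (derivative L).eval 1 *
      ∑ i ∈ Finset.range (2 * N + w - 1),
        ((((derivative R).eval 1)⁻¹ *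
            H (polyCheck R (extVec N w xv ((i : ℤ) + 1)))
          + H (polyCheck rho (extVec N w xv ((i : ℤ) + 1)))
          - H (sCheck (extVec N w xv ((i : ℤ) + 1))
              (polyCheck rho (extVec N w xv ((i : ℤ) + 1))))))
    - ∑ i ∈ Finset.range (2 * N),
        H (sConv c (polyConv L
          ((w : ℝ)⁻¹ • ∑ j ∈ Finset.range w,
            polyCheck rho (extVec N w xv ((i : ℤ) + 1 + (j : ℤ))))))

/-- The shift operator `S`: `[S(x̲)]_1 = Δ_∞` and `[S(x̲)]_i = x_{i-1}` for `2 ≤ i`. -/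
def shiftOp (xv : ℤ → SM) : ℤ → SM := fun i => if i ≤ 1 then dTop else xv (i - 1)

/-!
The shift turns the site sum `∑_{i=1}^{N_w} siteTerm(x_i)` into `∑_{i=0}^{N_w-1}` and the
window sum `∑_{i=1}^{2N} windowTerm(i)` into `∑_{i=0}^{2N-1}`, so the difference telescopes:
`U(S x̲) - U(x̲) = L'(1) (siteTerm(x_0) - siteTerm(x_{N_w})) - (windowTerm(0) - windowTerm(2N))`.
Since `Δ_∞` is absorbing for `⊠` and has zero entropy, `siteTerm(x_0) = siteTerm(Δ_∞) = 0`.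
As `i₀ ≤ 2N`, the last site and the last window lie in the constant tail, and together they
contribute exactly `-U(x_{i₀}; c)`. What is left, `-windowTerm(0)`, is minus the entropy of a
nonnegative measure (the coefficients of `L` are nonnegative because `L' = L'(1) λ`).
-/

def IsNonneg (x : SM) : Prop :=
  ∃ (μ : Measure EReal) (_ : IsFiniteMeasure μ), μ.toSignedMeasure = x

lemma toJordanDecomposition_toSignedMeasure_measure {α : Type*} [MeasurableSpace α]
    (μ : Measure α) [IsFiniteMeasure μ] :
    μ.toSignedMeasure.toJordanDecomposition = ⟨μ, 0, .zero_right⟩ :=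
  SignedMeasure.toJordanDecomposition_eq (by simp [JordanDecomposition.toSignedMeasure])

lemma jp_toSignedMeasure (μ : Measure EReal) [IsFiniteMeasure μ] :
    jp μ.toSignedMeasure = μ := by
  rw [jp, toJordanDecomposition_toSignedMeasure_measure]

lemma jn_toSignedMeasure (μ : Measure EReal) [IsFiniteMeasure μ] :
    jn μ.toSignedMeasure = 0 := by
  rw [jn, toJordanDecomposition_toSignedMeasure_measure]

lemma sConv_toSignedMeasure (μ ν : Measure EReal) [IsFiniteMeasure μ] [IsFiniteMeasure ν] :
    sConv μ.toSignedMeasure ν.toSignedMeasure = (mConv μ ν).toSignedMeasure := by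
  simp [sConv, mConv, jp_toSignedMeasure, jn_toSignedMeasure]

lemma sCheck_toSignedMeasure (μ ν : Measure EReal) [IsFiniteMeasure μ] [IsFiniteMeasure ν] :
    sCheck μ.toSignedMeasure ν.toSignedMeasure = (mCheck μ ν).toSignedMeasure := by
  simp [sCheck, mCheck, jp_toSignedMeasure, jn_toSignedMeasure]

lemma entFn_nonneg (α : EReal) : 0 ≤ entFn α := by
  unfold entFn
  split_ifs
  · exact le_rfl
  · exact le_rfl
  · exact Real.logb_nonneg one_lt_two (by linarith [Real.exp_pos (-α.toReal)])

lemma H_nonneg {x : SM} (hx : IsNonneg x) : 0 ≤ H x := by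
  obtain ⟨μ, _, rfl⟩ := hx
  rw [H, sInt, jp_toSignedMeasure, jn_toSignedMeasure, integral_zero_measure, sub_zero]
  exact integral_nonneg entFn_nonneg

lemma MemX.isNonneg {x : SM} (hx : MemX x) : IsNonneg x := by
  obtain ⟨⟨μ, hμ, rfl⟩, -⟩ := hx
  exact ⟨μ, inferInstance, rfl⟩

lemma IsNonneg.zero : IsNonneg 0 := ⟨0, inferInstance, by simp⟩

lemma IsNonneg.dirac (a : EReal) : IsNonneg (Measure.dirac a).toSignedMeasure :=
  ⟨_, inferInstance, rfl⟩

lemma IsNonneg.add {x y : SM} (hx : IsNonneg x) (hy : IsNonneg y) : IsNonneg (x + y) := by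
  obtain ⟨μ, _, rfl⟩ := hx
  obtain ⟨ν, _, rfl⟩ := hy
  exact ⟨μ + ν, inferInstance, Measure.toSignedMeasure_add μ ν⟩

lemma IsNonneg.smul {x : SM} {r : ℝ} (hr : 0 ≤ r) (hx : IsNonneg x) : IsNonneg (r • x) := by
  obtain ⟨μ, _, rfl⟩ := hx
  refine ⟨r.toNNReal • μ, inferInstance, ?_⟩
  rw [Measure.toSignedMeasure_smul, NNReal.smul_def, Real.coe_toNNReal r hr]

lemma IsNonneg.sum {ι : Type*} {s : Finset ι} {x : ι → SM} (hx : ∀ i ∈ s, IsNonneg (x i)) :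
    IsNonneg (∑ i ∈ s, x i) :=
  Finset.sum_induction x IsNonneg (fun _ _ => IsNonneg.add) IsNonneg.zero hx

lemma IsNonneg.sConv {x y : SM} (hx : IsNonneg x) (hy : IsNonneg y) : IsNonneg (sConv x y) := by
  obtain ⟨μ, _, rfl⟩ := hx
  obtain ⟨ν, _, rfl⟩ := hy
  exact ⟨mConv μ ν, inferInstance, (sConv_toSignedMeasure μ ν).symm⟩

lemma IsNonneg.sCheck {x y : SM} (hx : IsNonneg x) (hy : IsNonneg y) :
    IsNonneg (sCheck x y) := by
  obtain ⟨μ, _, rfl⟩ := hx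
  obtain ⟨ν, _, rfl⟩ := hy
  exact ⟨mCheck μ ν, inferInstance, (sCheck_toSignedMeasure μ ν).symm⟩

lemma IsNonneg.convPow {x : SM} (hx : IsNonneg x) : ∀ n, IsNonneg (convPow x n)
  | 0 => IsNonneg.dirac 0
  | n + 1 => (hx.convPow n).sConv hx

lemma IsNonneg.checkPow {x : SM} (hx : IsNonneg x) : ∀ n, IsNonneg (checkPow x n)
  | 0 => IsNonneg.dirac ⊤
  | n + 1 => (hx.checkPow n).sCheck hx

lemma IsNonneg.polyConv {p : ℝ[X]} (hp : ∀ n, 0 ≤ p.coeff n) {x : SM} (hx : IsNonneg x) :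
    IsNonneg (polyConv p x) :=
  IsNonneg.sum fun n _ => (hx.convPow n).smul (hp n)

lemma IsNonneg.polyCheck {p : ℝ[X]} (hp : ∀ n, 0 ≤ p.coeff n) {x : SM} (hx : IsNonneg x) :
    IsNonneg (polyCheck p x) :=
  IsNonneg.sum fun n _ => (hx.checkPow n).smul (hp n)

lemma measurable_tanhHalf : Measurable tanhHalf := by
  unfold tanhHalf
  refine Measurable.ite measurableSet_eq measurable_const
    (Measurable.ite measurableSet_eq measurable_const ?_)
  have htanh : Real.tanh = fun t => Real.sinh t / Real.cosh t := funext Real.tanh_eq_sinh_div_cosh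
  rw [htanh]
  fun_prop

lemma measurable_atanhTwo : Measurable atanhTwo := by
  unfold atanhTwo artanh
  refine Measurable.ite (measurableSet_le measurable_const measurable_id) measurable_const
    (Measurable.ite (measurableSet_le measurable_id measurable_const) measurable_const ?_)
  fun_prop

lemma mCheck_dirac (a b : EReal) :
    mCheck (Measure.dirac a) (Measure.dirac b)
      = Measure.dirac (atanhTwo (tanhHalf a * tanhHalf b)) := by
  have hmeas : Measurable fun p : EReal × EReal => atanhTwo (tanhHalf p.1 * tanhHalf p.2) :=
    measurable_atanhTwo.comp
      ((measurable_tanhHalf.comp measurable_fst).mul (measurable_tanhHalf.comp measurable_snd))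
  rw [mCheck, Measure.dirac_prod_dirac, Measure.map_dirac' hmeas]

lemma sCheck_dTop_dTop : sCheck dTop dTop = dTop := by
  rw [dTop, sCheck_toSignedMeasure]
  exact Measure.toSignedMeasure_congr (by norm_num [mCheck_dirac, tanhHalf, atanhTwo])

lemma checkPow_dTop : ∀ n, checkPow dTop n = dTop
  | 0 => rfl
  | n + 1 => by rw [checkPow, checkPow_dTop n, sCheck_dTop_dTop]

lemma polyCheck_dTop (p : ℝ[X]) : polyCheck p dTop = p.eval 1 • dTop := by
  simp_rw [polyCheck, checkPow_dTop, ← Finset.sum_smul, eval_eq_sum_range, one_pow, mul_one]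

lemma H_dTop : H dTop = 0 := by
  simp [H, sInt, dTop, jp_toSignedMeasure, jn_toSignedMeasure, entFn]

lemma coeff_nonneg_of_derivative_eq_C_mul {p q : ℝ[X]} {a : ℝ} (hq : ∀ n, 0 ≤ q.coeff n)
    (h0 : p.eval 0 = 0) (h1 : p.eval 1 = 1) (hd : derivative p = C a * q) :
    ∀ n, 0 ≤ p.coeff n := by
  have hc0 : p.coeff 0 = 0 := by rwa [coeff_zero_eq_eval_zero]
  have hcoeff (n : ℕ) : p.coeff (n + 1) * (n + 1) = a * q.coeff n := by
    simpa [hd] using (coeff_derivative p n).symm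
  -- all coefficients have the sign of `a`, and they sum to `p(1) = 1`
  have ha : 0 ≤ a := by
    by_contra! ha
    have hle : ∀ n, p.coeff n ≤ 0
      | 0 => hc0.le
      | n + 1 => by nlinarith [hcoeff n, hq n, n.cast_add_one_pos (α := ℝ)]
    have : p.eval 1 ≤ 0 := by
      rw [eval_eq_sum_range]
      exact Finset.sum_nonpos fun n _ => by simpa using hle n
    linarith
  intro n
  cases n with
  | zero => exact hc0.ge
  | succ n => nlinarith [hcoeff n, hq n, n.cast_add_one_pos (α := ℝ)]

section Coupled

variable (rho L R : ℝ[X]) (N w : ℕ) (c : SM)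

def siteTerm (y : SM) : ℝ :=
  ((derivative R).eval 1)⁻¹ * H (polyCheck R y) + H (polyCheck rho y)
    - H (sCheck y (polyCheck rho y))

def windowTerm (e : ℤ → SM) (i : ℤ) : ℝ :=
  H (sConv c (polyConv L ((w : ℝ)⁻¹ • ∑ j ∈ Finset.range w, polyCheck rho (e (i + j)))))

lemma potU_eq_siteTerm (x : SM) :
    potU rho L R x c
      = (derivative L).eval 1 * siteTerm rho R x - H (sConv c (polyConv L (polyCheck rho x))) := by
  rw [potU, siteTerm, div_eq_mul_inv]
  ring

lemma coupledU_eq_sum (xv : ℤ → SM) :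
    coupledU rho L R N w c xv
      = (derivative L).eval 1 * ∑ i ∈ Finset.range (2 * N + w - 1),
          siteTerm rho R (extVec N w xv ((i : ℤ) + 1))
        - ∑ i ∈ Finset.range (2 * N), windowTerm rho L w c (extVec N w xv) ((i : ℤ) + 1) := by
  simp only [coupledU, siteTerm, windowTerm]

lemma extVec_shiftOp (xv : ℤ → SM) {k : ℤ} (hk : k ≤ ((2 * N + w - 1 : ℕ) : ℤ)) :
    extVec N w (shiftOp xv) k = extVec N w xv (k - 1) := by
  simp only [extVec, shiftOp]
  split_ifs <;> first | rfl | omega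

lemma coupledU_shiftOp (xv : ℤ → SM) :
    coupledU rho L R N w c (shiftOp xv)
      = (derivative L).eval 1 * ∑ i ∈ Finset.range (2 * N + w - 1),
          siteTerm rho R (extVec N w xv i)
        - ∑ i ∈ Finset.range (2 * N), windowTerm rho L w c (extVec N w xv) i := by
  have hsite : ∀ i ∈ Finset.range (2 * N + w - 1),
      siteTerm rho R (extVec N w (shiftOp xv) ((i : ℤ) + 1)) = siteTerm rho R (extVec N w xv i) :=
    fun i hi => by
      rw [extVec_shiftOp N w xv (by rw [Finset.mem_range] at hi; omega), add_sub_cancel_right]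
  have hwindow : ∀ i ∈ Finset.range (2 * N),
      windowTerm rho L w c (extVec N w (shiftOp xv)) ((i : ℤ) + 1)
        = windowTerm rho L w c (extVec N w xv) i := fun i hi => by
    refine congrArg (fun y => H (sConv c (polyConv L ((w : ℝ)⁻¹ • y))))
      (Finset.sum_congr rfl fun j hj => ?_)
    rw [extVec_shiftOp N w xv (by rw [Finset.mem_range] at hi hj; omega), add_right_comm,
      add_sub_cancel_right]
  rw [coupledU_eq_sum, Finset.sum_congr rfl hsite, Finset.sum_congr rfl hwindow]

lemma coupledU_shiftOp_sub (xv : ℤ → SM) :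
    coupledU rho L R N w c (shiftOp xv) - coupledU rho L R N w c xv
      = (derivative L).eval 1 * (siteTerm rho R (extVec N w xv 0)
            - siteTerm rho R (extVec N w xv ((2 * N + w - 1 : ℕ) : ℤ)))
        - (windowTerm rho L w c (extVec N w xv) 0
            - windowTerm rho L w c (extVec N w xv) ((2 * N : ℕ) : ℤ)) := by
  have hsite :=
    Finset.sum_range_sub' (fun i : ℕ => siteTerm rho R (extVec N w xv i)) (2 * N + w - 1)
  have hwindow :=
    Finset.sum_range_sub' (fun i : ℕ => windowTerm rho L w c (extVec N w xv) i) (2 * N)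
  rw [Finset.sum_sub_distrib] at hsite hwindow
  simp only [Nat.cast_add, Nat.cast_one] at hsite hwindow
  rw [coupledU_shiftOp, coupledU_eq_sum]
  linear_combination (derivative L).eval 1 * hsite - hwindow

lemma siteTerm_dTop (hrho : rho.eval 1 = 1) (hR : R.eval 1 = 1) : siteTerm rho R dTop = 0 := by
  simp [siteTerm, polyCheck_dTop, hrho, hR, sCheck_dTop_dTop, H_dTop]

lemma windowTerm_of_eq (hw : w ≠ 0) {e : ℤ → SM} {i : ℤ} {y : SM}
    (he : ∀ j < w, e (i + j) = y) :
    windowTerm rho L w c e i = H (sConv c (polyConv L (polyCheck rho y))) := by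
  rw [windowTerm, Finset.sum_congr rfl fun j hj => by rw [he j (Finset.mem_range.mp hj)],
    Finset.sum_const, Finset.card_range, ← Nat.cast_smul_eq_nsmul ℝ, smul_smul,
    inv_mul_cancel₀ (Nat.cast_ne_zero.mpr hw), one_smul]

lemma windowTerm_nonneg (hL : ∀ n, 0 ≤ L.coeff n) (hrho : ∀ n, 0 ≤ rho.coeff n)
    (hc : IsNonneg c) {e : ℤ → SM} (he : ∀ k, IsNonneg (e k)) (i : ℤ) :
    0 ≤ windowTerm rho L w c e i :=
  H_nonneg <| hc.sConv <| IsNonneg.polyConv hL <| (IsNonneg.sum fun j _ =>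
    (he _).polyCheck hrho).smul (by positivity)

end Coupled

lemma extVec_isNonneg {N w : ℕ} {xv : ℤ → SM}
    (hxX : ∀ i : ℤ, 1 ≤ i → i ≤ ((2 * N + w - 1 : ℕ) : ℤ) → MemX (xv i)) (k : ℤ) :
    IsNonneg (extVec N w xv k) := by
  unfold extVec
  split_ifs with hk
  · exact (hxX k hk.1 hk.2).isNonneg
  · exact IsNonneg.dirac ⊤

theorem coupled_potential_shift_bound_general
    (lam rho L R : Polynomial ℝ)
    (hlamnn : ∀ n, 0 ≤ lam.coeff n) (hrhonn : ∀ n, 0 ≤ rho.coeff n)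
    (hrho1 : rho.eval 1 = 1)
    (hL0 : L.eval 0 = 0) (hL1 : L.eval 1 = 1)
    (hR1 : R.eval 1 = 1)
    (hLd : derivative L = Polynomial.C ((derivative L).eval 1) * lam)
    (N w : ℕ) (hN : 1 ≤ N) (hw : 1 ≤ w) (hwN : w / 2 ≤ N)
    (c : SM) (hc : MemX c) (xv : ℤ → SM)
    (hxX : ∀ i : ℤ, 1 ≤ i → i ≤ ((2 * N + w - 1 : ℕ) : ℤ) → MemX (xv i))
    (hconst : ∀ i : ℤ, ((N : ℤ) + ((w / 2 : ℕ) : ℤ)) ≤ i →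
      i ≤ ((2 * N + w - 1 : ℕ) : ℤ) → xv i = xv ((N : ℤ) + ((w / 2 : ℕ) : ℤ))) :
    coupledU rho L R N w c (shiftOp xv) - coupledU rho L R N w c xv
      ≤ -potU rho L R (xv ((N : ℤ) + ((w / 2 : ℕ) : ℤ))) c := by
  set x₀ := xv ((N : ℤ) + ((w / 2 : ℕ) : ℤ))
  -- `i₀ ≤ 2N` because `⌊w/2⌋ ≤ N`
  have htail : ∀ i : ℤ, ((2 * N : ℕ) : ℤ) ≤ i → i ≤ ((2 * N + w - 1 : ℕ) : ℤ) →
      extVec N w xv i = x₀ := fun i h₁ h₂ => by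
    rw [extVec, if_pos ⟨by omega, h₂⟩, hconst i (by omega) h₂]
  have hfirst : extVec N w xv 0 = dTop := by rw [extVec, if_neg (by omega)]
  have hlast : windowTerm rho L w c (extVec N w xv) ((2 * N : ℕ) : ℤ)
      = H (sConv c (polyConv L (polyCheck rho x₀))) :=
    windowTerm_of_eq rho L w c (by omega) fun j hj => htail _ (by omega) (by omega)
  have hfirstWindow : 0 ≤ windowTerm rho L w c (extVec N w xv) 0 :=
    windowTerm_nonneg rho L w c (coeff_nonneg_of_derivative_eq_C_mul hlamnn hL0 hL1 hLd)
      hrhonn hc.isNonneg (extVec_isNonneg hxX) 0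
  rw [coupledU_shiftOp_sub, hfirst, htail _ (by omega) le_rfl, hlast,
    siteTerm_dTop rho R hrho1 hR1, potU_eq_siteTerm]
  linarith

/-- Potential change under the shift operator: if
`x̲ = (x_1, …, x_{N_w}) ∈ X^{N_w}` satisfies `x_i = x_{i_0}` for all
`i_0 = N + ⌊w/2⌋ ≤ i ≤ N_w`, then
`U(S(x̲); c) - U(x̲; c) ≤ -U(x_{i_0}; c)`. -/
theorem coupled_potential_shift_bound
    (lam rho L R : Polynomial ℝ)
    (hlam0 : lam.coeff 0 = 0) (hrho0 : rho.coeff 0 = 0)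
    (hlamnn : ∀ n, 0 ≤ lam.coeff n) (hrhonn : ∀ n, 0 ≤ rho.coeff n)
    (hlam1 : lam.eval 1 = 1) (hrho1 : rho.eval 1 = 1)
    (hL0 : L.eval 0 = 0) (hL1 : L.eval 1 = 1)
    (hR0 : R.eval 0 = 0) (hR1 : R.eval 1 = 1)
    (hLd : derivative L = Polynomial.C ((derivative L).eval 1) * lam)
    (hRd : derivative R = Polynomial.C ((derivative R).eval 1) * rho)
    (N w : ℕ) (hN : 1 ≤ N) (hw : 1 ≤ w) (hwN : w / 2 ≤ N)
    (c : SM) (hc : MemX c) (xv : ℤ → SM)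
    (hxX : ∀ i : ℤ, 1 ≤ i → i ≤ ((2 * N + w - 1 : ℕ) : ℤ) → MemX (xv i))
    (hconst : ∀ i : ℤ, ((N : ℤ) + ((w / 2 : ℕ) : ℤ)) ≤ i →
      i ≤ ((2 * N + w - 1 : ℕ) : ℤ) → xv i = xv ((N : ℤ) + ((w / 2 : ℕ) : ℤ))) :
    coupledU rho L R N w c (shiftOp xv) - coupledU rho L R N w c xv
      ≤ -potU rho L R (xv ((N : ℤ) + ((w / 2 : ℕ) : ℤ))) c :=
  coupled_potential_shift_bound_general lam rho L R hlamnn hrhonn hrho1 hL0 hL1 hR1 hLd N w hN hw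
    hwN c hc xv hxX hconst

end SCLDPC
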